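/- arXiv:1601.07259 — 2 statements merged into one kernel-verified Lean document; each statement's English description precedes it below -/
import Mathlib

section
/- There exists L such that for every integer l₁ ≥ L the following holds: for every β < 1/2, lim_{j→∞} (log N_j)/(l_j)^β = ∞. -/
/-!
Write `m = ⌊√N_j⌋`. Then `log N_{j+1} = log m! ≥ (m - 1) log 2`, which is of order `√N_j`,
while `l_{j+1}^β = l_j^β N_j^β`. Since `N_j^β log N_j = o(√N_j)` for `β < 1/2` and `N_j → ∞`,
the quotient `log N_j / l_j^β` eventually at least doubles from one step to the next.
That `N_j → ∞` holds once `l₁ ≥ 25`: then every `N_j ≥ 25`, and `n < (⌊√n⌋)!` for `n ≥ 25`.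
-/

open Filter MeasureTheory Topology

namespace EntDim

/-- The left shift `σ` on `A^ℤ`: `(shift x) i = x (i + 1)`. -/
def shift {A : Type*} (x : ℤ → A) : ℤ → A := fun i => x (i + 1)

/-- The shift by an integer `k`: `(shiftZ k x) i = x (i + k)`, i.e. `σ^k`. -/
def shiftZ {A : Type*} (k : ℤ) (x : ℤ → A) : ℤ → A := fun i => x (i + k)

/-- A subshift: a nonempty closed shift-invariant subset of `A^ℤ`. -/
def IsSubshift {A : Type*} [TopologicalSpace A] (X : Set (ℤ → A)) : Prop :=
  X.Nonempty ∧ IsClosed X ∧ shift '' X = X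

/-- `B_n(X)`: the set of words of length `n` occurring in `X`. -/
def wordsOf {A : Type*} (X : Set (ℤ → A)) (n : ℕ) : Set (Fin n → A) :=
  { w | ∃ x ∈ X, ∀ i : Fin n, w i = x ((i : ℕ) : ℤ) }

/-- `X` is minimal: every orbit is dense in `X`. -/
def IsMinimal {A : Type*} [TopologicalSpace A] (X : Set (ℤ → A)) : Prop :=
  ∀ x ∈ X, X ⊆ closure { z | ∃ k : ℤ, z = shiftZ k x }

/-- `μ` is a shift-invariant Borel probability measure carried by `X`. -/
def IsInvProbOn {A : Type*} [MeasurableSpace A] (μ : Measure (ℤ → A))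
    (X : Set (ℤ → A)) : Prop :=
  IsProbabilityMeasure μ ∧ MeasurePreserving shift μ μ ∧ μ X = 1

/-- The cylinder `[u] = {x ∈ X : x_i = u_i for 0 ≤ i < |u|}` of a finite word `u`. -/
def cylW {A : Type*} (X : Set (ℤ → A)) (u : List A) : Set (ℤ → A) :=
  { x | x ∈ X ∧ ∀ i : Fin u.length, x ((i : ℕ) : ℤ) = u.get i }

/-- The `n`-cylinder `P_n(x) = {y ∈ X : y_i = x_i for 0 ≤ i < n}` of a point `x`. -/
def cylPt {A : Type*} (X : Set (ℤ → A)) (x : ℤ → A) (n : ℕ) : Set (ℤ → A) :=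
  { y | y ∈ X ∧ ∀ i : ℕ, i < n → y (i : ℤ) = x (i : ℤ) }

/-- The first return time `R_n(x) = inf {k ≥ 1 : x_{k+i} = x_i for 0 ≤ i < n}`
(with the junk value `0` if no such `k` exists). -/
noncomputable def retTime {A : Type*} (x : ℤ → A) (n : ℕ) : ℕ :=
  sInf { k : ℕ | 1 ≤ k ∧ ∀ i : ℕ, i < n → x ((k : ℤ) + (i : ℕ)) = x ((i : ℕ) : ℤ) }

/-- The sequence of pairs `(l_j, N_j)`, `j ≥ 1`, with `l_1 = l1`, `N_1 = 2^⌊√l1⌋`,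
`l_{j+1} = l_j · N_j` and `N_{j+1} = (⌊√N_j⌋)!`.  (The value at `j = 0` is junk.) -/
def lN (l1 : ℕ) : ℕ → ℕ × ℕ
  | 0 => (0, 0)
  | 1 => (l1, 2 ^ Nat.sqrt l1)
  | j + 2 => ((lN l1 (j + 1)).1 * (lN l1 (j + 1)).2, Nat.factorial (Nat.sqrt (lN l1 (j + 1)).2))

/-- The length `l_j` of the words of `C_j`. -/
def lseq (l1 j : ℕ) : ℕ := (lN l1 j).1

/-- The cardinality `N_j` of `C_j`. -/
def Nseq (l1 j : ℕ) : ℕ := (lN l1 j).2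

/-- `i ∈ P_j = {2} ∪ {m² : 2 ≤ m ≤ ⌊√N⌋}` (1-based position `i`, where `N = N_j`):
the permuted (unstable) positions. -/
def PermutedIdx (N i : ℕ) : Prop :=
  i = 2 ∨ ∃ m : ℕ, 2 ≤ m ∧ m ≤ Nat.sqrt N ∧ i = m ^ 2

/-- The data of the Construction: a positive integer `l1` and ordered lists
`C j` (`j ≥ 1`) of distinct binary words (`C 0` is irrelevant), where `C 1` consists of
`N_1 = 2^⌊√l1⌋` words of length `l1`, `C j` consists of `N_j` words of length `l_j`, and
`C (j+1)` is the set of all concatenations of the words of `C j` reordered by a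
permutation preserving `P_j` and fixing every position outside `P_j`. -/
structure Construction where
  l1 : ℕ
  hl1 : 0 < l1
  C : ℕ → List (List Bool)
  nodup : ∀ j, 1 ≤ j → (C j).Nodup
  length_eq : ∀ j, 1 ≤ j → (C j).length = Nseq l1 j
  wordLength : ∀ j, 1 ≤ j → ∀ w ∈ C j, w.length = lseq l1 j
  mem_succ : ∀ j, 1 ≤ j → ∀ w : List Bool,
    w ∈ C (j + 1) ↔
      ∃ τ : Equiv.Perm (Fin (C j).length),
        (∀ i : Fin (C j).length, ¬ PermutedIdx (Nseq l1 j) ((i : ℕ) + 1) → τ i = i) ∧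
        (∀ i : Fin (C j).length, PermutedIdx (Nseq l1 j) ((i : ℕ) + 1) →
            PermutedIdx (Nseq l1 j) ((τ i : ℕ) + 1)) ∧
        w = (List.ofFn fun i : Fin (C j).length => (C j).get (τ i)).flatten

/-- The subshift `X` of the Construction: all `x ∈ {0,1}^ℤ` each of whose finite
subwords occurs as a subword of some word in some `C j`. -/
def Construction.space (c : Construction) : Set (ℤ → Bool) :=
  { x | ∀ (a : ℤ) (n : ℕ), ∃ j, 1 ≤ j ∧ ∃ w ∈ c.C j,
      (List.ofFn fun i : Fin n => x (a + (i : ℕ))) <:+: w }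

/-- The offset `t_j(x) ∈ {0, …, l_j − 1}` of the decomposition of `x` into `C j`-words
(defined as an infimum; it is unique in the Marker variant). -/
noncomputable def Construction.tOffset (c : Construction) (j : ℕ) (x : ℤ → Bool) : ℕ :=
  sInf { t : ℕ | t < lseq c.l1 j ∧ ∀ m : ℤ,
    (List.ofFn fun i : Fin (lseq c.l1 j) =>
      x (m * (lseq c.l1 j : ℤ) - (t : ℤ) + (i : ℕ))) ∈ c.C j }

/-- The Marker variant: every word of `C 1` begins with `001`, and `00` occurs in each
word of `C 1` only as its prefix. -/
structure MarkerConstruction extends Construction where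
  marker_prefix : ∀ w ∈ C 1, [false, false, true] <+: w
  marker_unique : ∀ w ∈ C 1, ∀ n : ℕ, [false, false] <+: w.drop n → n = 0

open Real

lemma sq_succ_le_factorial {m : ℕ} (hm : 5 ≤ m) : (m + 1) ^ 2 ≤ m.factorial := by
  induction m, hm using Nat.le_induction with
  | base => decide
  | succ m hm ih =>
    rw [Nat.factorial_succ]
    calc (m + 1 + 1) ^ 2 ≤ (m + 1) * (m + 1) ^ 2 := by nlinarith
      _ ≤ (m + 1) * m.factorial := Nat.mul_le_mul_left _ ih

lemma lt_factorial_sqrt {n : ℕ} (hn : 25 ≤ n) : n < (Nat.sqrt n).factorial := by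
  have h5 : 5 ≤ Nat.sqrt n := Nat.le_sqrt.2 hn
  calc n < (Nat.sqrt n + 1) ^ 2 := by rw [sq]; exact Nat.lt_succ_sqrt n
    _ ≤ (Nat.sqrt n).factorial := sq_succ_le_factorial h5

lemma sub_one_mul_log_two_le_log_factorial (m : ℕ) :
    ((m : ℝ) - 1) * log 2 ≤ log m.factorial := by
  rcases Nat.eq_zero_or_pos m with rfl | hm
  · simp [log_nonneg one_le_two]
  obtain ⟨k, rfl⟩ := Nat.exists_eq_add_of_le' hm
  have h : 2 ^ k ≤ (k + 1).factorial := by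
    simpa [add_comm] using Nat.factorial_mul_pow_le_factorial (m := 1) (n := k)
  calc ((↑(k + 1) : ℝ) - 1) * log 2 = log ((2 : ℝ) ^ k) := by push_cast [log_pow]; ring
    _ ≤ log (k + 1).factorial := log_le_log (by positivity) (by exact_mod_cast h)

lemma eventually_two_mul_rpow_mul_log_le {β : ℝ} (hβ : β < 1 / 2) :
    ∀ᶠ x : ℝ in atTop, 2 * x ^ β * log x ≤ (√x - 2) * log 2 := by
  have hlog : (fun x : ℝ => x ^ β * log x) =o[atTop] fun x => √x := by
    refine ((Asymptotics.isBigO_refl (fun x : ℝ => x ^ β) atTop).mul_isLittleO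
      (isLittleO_log_rpow_atTop (sub_pos.2 hβ))).congr' (.refl _ _) ?_
    filter_upwards [eventually_gt_atTop 0] with x hx
    rw [← rpow_add hx, add_sub_cancel, sqrt_eq_rpow]
  filter_upwards [hlog.bound (by positivity : 0 < log 2 / 4), eventually_ge_atTop 16]
    with x hbound hx
  have hsqrt : 4 ≤ √x := (le_sqrt (by norm_num) (by linarith)).2 (by norm_num [hx])
  have hlogx : 0 ≤ log x := log_nonneg (by linarith)
  rw [norm_of_nonneg (mul_nonneg (rpow_nonneg (by linarith) β) hlogx),
    norm_of_nonneg (sqrt_nonneg x)] at hbound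
  nlinarith [log_pos one_lt_two]

lemma eventually_two_mul_rpow_mul_log_le_log_factorial_sqrt {β : ℝ} (hβ : β < 1 / 2) :
    ∀ᶠ n : ℕ in atTop, 2 * (n : ℝ) ^ β * log n ≤ log (Nat.sqrt n).factorial := by
  filter_upwards [tendsto_natCast_atTop_atTop.eventually (eventually_two_mul_rpow_mul_log_le hβ)]
    with n hn
  have hsqrt : √(n : ℝ) - 2 ≤ (Nat.sqrt n : ℝ) - 1 := by
    linarith [real_sqrt_le_nat_sqrt_succ (a := n)]
  calc 2 * (n : ℝ) ^ β * log n ≤ (√(n : ℝ) - 2) * log 2 := hn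
    _ ≤ ((Nat.sqrt n : ℝ) - 1) * log 2 := by gcongr
    _ ≤ log (Nat.sqrt n).factorial := sub_one_mul_log_two_le_log_factorial _

lemma two_mul_log_div_rpow_le {β : ℝ} {l N M : ℕ} (hl : 0 < l) (hN : 0 < N)
    (h : 2 * (N : ℝ) ^ β * log N ≤ log M) :
    2 * (log N / (l : ℝ) ^ β) ≤ log M / ((l * N : ℕ) : ℝ) ^ β := by
  have hlβ : 0 < (l : ℝ) ^ β := rpow_pos_of_pos (by exact_mod_cast hl) β
  have hNβ : 0 < (N : ℝ) ^ β := rpow_pos_of_pos (by exact_mod_cast hN) β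
  rw [Nat.cast_mul, mul_rpow (Nat.cast_nonneg l) (Nat.cast_nonneg N), le_div_iff₀ (by positivity)]
  calc 2 * (log N / (l : ℝ) ^ β) * ((l : ℝ) ^ β * (N : ℝ) ^ β)
      = 2 * (N : ℝ) ^ β * log N := by field_simp
    _ ≤ log M := h

lemma lseq_succ (l1 : ℕ) {j : ℕ} (hj : 1 ≤ j) : lseq l1 (j + 1) = lseq l1 j * Nseq l1 j := by
  obtain ⟨k, rfl⟩ := Nat.exists_eq_add_of_le' hj
  rfl

lemma Nseq_succ (l1 : ℕ) {j : ℕ} (hj : 1 ≤ j) :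
    Nseq l1 (j + 1) = (Nat.sqrt (Nseq l1 j)).factorial := by
  obtain ⟨k, rfl⟩ := Nat.exists_eq_add_of_le' hj
  rfl

lemma Nseq_pos (l1 : ℕ) {j : ℕ} (hj : 1 ≤ j) : 0 < Nseq l1 j := by
  obtain ⟨k, rfl⟩ := Nat.exists_eq_add_of_le' hj
  cases k with
  | zero => exact Nat.two_pow_pos _
  | succ k => rw [Nseq_succ l1 (by omega)]; exact Nat.factorial_pos _

lemma lseq_pos {l1 : ℕ} (hl1 : 0 < l1) {j : ℕ} (hj : 1 ≤ j) : 0 < lseq l1 j := by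
  induction j, hj using Nat.le_induction with
  | base => exact hl1
  | succ j hj ih => rw [lseq_succ l1 hj]; exact Nat.mul_pos ih (Nseq_pos l1 hj)

lemma le_Nseq {l1 : ℕ} (hl1 : 25 ≤ l1) {j : ℕ} (hj : 1 ≤ j) : 25 ≤ Nseq l1 j := by
  induction j, hj using Nat.le_induction with
  | base =>
    calc 25 ≤ 2 ^ 5 := by norm_num
      _ ≤ 2 ^ Nat.sqrt l1 := Nat.pow_le_pow_right two_pos (Nat.le_sqrt.2 hl1)
  | succ j hj ih => rw [Nseq_succ l1 hj]; exact (lt_factorial_sqrt ih).le.trans' ih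

lemma tendsto_Nseq {l1 : ℕ} (hl1 : 25 ≤ l1) : Tendsto (Nseq l1) atTop atTop := by
  have hmono : StrictMono fun k => Nseq l1 (k + 1) := strictMono_nat_of_lt_succ fun k => by
    rw [Nseq_succ l1 (Nat.le_add_left 1 k)]
    exact lt_factorial_sqrt (le_Nseq hl1 (Nat.le_add_left 1 k))
  exact (tendsto_add_atTop_iff_nat 1).1 hmono.tendsto_atTop

/-- There is `L` such that for every `l₁ ≥ L` and every `β < 1/2`,
`lim_{j→∞} (log N_j)/(l_j)^β = ∞`. -/
theorem statement5 :
    ∃ L : ℕ, ∀ l1 : ℕ, L ≤ l1 → ∀ β : ℝ, β < 1 / 2 →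
      Tendsto (fun j : ℕ => Real.log (Nseq l1 j) / (lseq l1 j : ℝ) ^ β) atTop atTop := by
  refine ⟨25, fun l1 hl1 β hβ => ?_⟩
  obtain ⟨J, hJ⟩ := eventually_atTop.1 <| ((tendsto_Nseq hl1).eventually
    (eventually_two_mul_rpow_mul_log_le_log_factorial_sqrt hβ)).and (eventually_ge_atTop 1)
  have hJ1 : 1 ≤ J := (hJ J le_rfl).2
  have hl1_pos : 0 < l1 := by omega
  refine (tendsto_add_atTop_iff_nat J).1 <| tendsto_atTop_of_geom_le (c := 2) ?_ one_lt_two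
    fun k => ?_
  · rw [zero_add]
    have hN : (1 : ℝ) < Nseq l1 J := by exact_mod_cast (le_Nseq hl1 hJ1).trans_lt' (by norm_num)
    exact div_pos (log_pos hN) (rpow_pos_of_pos (mod_cast lseq_pos hl1_pos hJ1) β)
  · obtain ⟨hstep, hj⟩ := hJ (k + J) (Nat.le_add_left J k)
    rw [add_right_comm, lseq_succ l1 hj, Nseq_succ l1 hj]
    exact two_mul_log_div_rpow_le (lseq_pos hl1_pos hj) (Nseq_pos l1 hj) hstep

end EntDim
end

section
/- For every j ≥ 1, log N_j ≤ (log 2 / 2^{j−1}) · √(l_j). -/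
open Filter MeasureTheory Topology

namespace EntDim

/-!
Induction on `j`. Since `s! ≤ s^s` and `s = ⌊√N⌋ ≤ √N`, we get
`log N_{j+1} ≤ √N_j · (log N_j) / 2`, and `√l_{j+1} = √l_j · √N_j`; so the inductive bound
for `log N_j` carries over to `N_{j+1}` with the constant halved.
-/

lemma log_factorial_sqrt_le (N : ℕ) :
    Real.log (Nat.sqrt N).factorial ≤ Real.sqrt N * (Real.log N / 2) := by
  set s := Nat.sqrt N
  rcases Nat.eq_zero_or_pos s with hs | hs
  · simp only [hs, Nat.factorial_zero, Nat.cast_one, Real.log_one]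
    have := Real.log_natCast_nonneg N
    positivity
  calc Real.log s.factorial ≤ Real.log ((s : ℝ) ^ s) :=
        Real.log_le_log (by positivity) (by exact_mod_cast s.factorial_le_pow)
    _ = s * Real.log s := Real.log_pow _ _
    _ ≤ Real.sqrt N * Real.log (Real.sqrt N) := by
        have hsN : (s : ℝ) ≤ Real.sqrt N := Real.nat_sqrt_le_real_sqrt
        have hlog : 0 ≤ Real.log s := Real.log_natCast_nonneg s
        gcongr
    _ = Real.sqrt N * (Real.log N / 2) := by rw [Real.log_sqrt (Nat.cast_nonneg _)]

lemma Nseq_one (l1 : ℕ) : Nseq l1 1 = 2 ^ Nat.sqrt l1 := rfl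

lemma lseq_one (l1 : ℕ) : lseq l1 1 = l1 := rfl

lemma Nseq_add_two (l1 k : ℕ) : Nseq l1 (k + 2) = (Nat.sqrt (Nseq l1 (k + 1))).factorial := rfl

lemma lseq_add_two (l1 k : ℕ) : lseq l1 (k + 2) = lseq l1 (k + 1) * Nseq l1 (k + 1) := rfl

lemma log_Nseq_succ_le (l1 k : ℕ) :
    Real.log (Nseq l1 (k + 1)) ≤ Real.log 2 / 2 ^ k * Real.sqrt (lseq l1 (k + 1)) := by
  induction k with
  | zero =>
    rw [Nseq_one, lseq_one, Nat.cast_pow, Real.log_pow, Nat.cast_ofNat]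
    have := Real.log_nonneg one_le_two
    calc (Nat.sqrt l1 : ℝ) * Real.log 2 ≤ Real.sqrt l1 * Real.log 2 := by
          gcongr; exact Real.nat_sqrt_le_real_sqrt
      _ = Real.log 2 / 2 ^ 0 * Real.sqrt l1 := by ring
  | succ k ih =>
    set N := Nseq l1 (k + 1)
    set l := lseq l1 (k + 1)
    rw [Nseq_add_two, lseq_add_two, Nat.cast_mul, Real.sqrt_mul (Nat.cast_nonneg _)]
    calc Real.log (Nat.sqrt N).factorial ≤ Real.sqrt N * (Real.log N / 2) :=
          log_factorial_sqrt_le N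
      _ ≤ Real.sqrt N * (Real.log 2 / 2 ^ k * Real.sqrt l / 2) := by gcongr
      _ = Real.log 2 / 2 ^ (k + 1) * (Real.sqrt l * Real.sqrt N) := by ring

theorem statement6_general (l1 : ℕ) (j : ℕ) (hj : 1 ≤ j) :
    Real.log (Nseq l1 j) ≤ Real.log 2 / 2 ^ (j - 1) * Real.sqrt (lseq l1 j) := by
  obtain ⟨k, rfl⟩ := Nat.exists_eq_add_of_le' hj
  exact log_Nseq_succ_le l1 k

/-- For every `j ≥ 1`, `log N_j ≤ (log 2 / 2^(j−1)) · √(l_j)`. -/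
theorem statement6 (l1 : ℕ) (hl1 : 0 < l1) (j : ℕ) (hj : 1 ≤ j) :
    Real.log (Nseq l1 j) ≤ Real.log 2 / 2 ^ (j - 1) * Real.sqrt (lseq l1 j) :=
  statement6_general l1 j hj

end EntDim
end
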